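/- In a MAPT, the time distance between coherent cuts is constant: if C1 and C2 are coherent cuts, s1, s1' ∈ C1, s2, s2' ∈ C2, ω is an evolution from s1 to s2 and ω' is an evolution from s1' to s2', then Δ(ω) = Δ(ω'). -/
import Mathlib



structure ATrans (Val Loc : Type) where
  src : Loc
  f : Val → Val
  lo : ℕ
  hi : ℕ
  dst : Loc

structure MState (n : ℕ) (Val Loc : Type) where
  loc : Fin n → Loc
  clock : Fin n → ℕ
  v : Val

structure GMAPT (n : ℕ) (Val Loc : Type) where
  trans : Fin n → Set (ATrans Val Loc)
  initLoc : Fin n → Loc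
  finalLoc : Fin n → Loc
  period : Fin n → ℕ
  period_pos : ∀ i, 0 < period i
  initState : MState n Val Loc


/-- Labels for state changes: transition firing, reset, or unit time increase. -/
inductive Ev (n : ℕ) (Val Loc : Type) where
  | tr (i : Fin n) (t : ATrans Val Loc)
  | rst (i : Fin n)
  | tick


variable {n : ℕ} {Val Loc : Type}


/-- A transition `t` of agent `i` is enabled at state `s`. -/
def TransEnabled (M : GMAPT n Val Loc) (i : Fin n) (t : ATrans Val Loc)
    (s : MState n Val Loc) : Prop :=
  t ∈ M.trans i ∧ s.loc i = t.src ∧ t.lo ≤ s.clock i ∧ s.clock i ≤ t.hi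

/-- Firing a transition updates the locality of agent `i` and the shared variable. -/
def fireTrans (i : Fin n) (t : ATrans Val Loc) (s : MState n Val Loc) : MState n Val Loc :=
  { loc := Function.update s.loc i t.dst, clock := s.clock, v := t.f s.v }

/-- The reset of agent `i` is enabled at `s`. -/
def ResetEnabled (M : GMAPT n Val Loc) (i : Fin n) (s : MState n Val Loc) : Prop :=
  s.loc i = M.finalLoc i ∧ s.clock i = M.period i

/-- Firing a reset sends agent `i` back to its initial locality with clock 0. -/
def fireReset (M : GMAPT n Val Loc) (i : Fin n) (s : MState n Val Loc) : MState n Val Loc :=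
  { loc := Function.update s.loc i (M.initLoc i),
    clock := Function.update s.clock i 0, v := s.v }

/-- Time may increase at `s`. -/
def TimeEnabled (M : GMAPT n Val Loc) (s : MState n Val Loc) : Prop :=
  ∀ i, (∃ t ∈ M.trans i, s.loc i = t.src ∧ s.clock i < t.hi) ∨
    (s.loc i = M.finalLoc i ∧ s.clock i < M.period i)

/-- A unit time increase. -/
def tickState (s : MState n Val Loc) : MState n Val Loc :=
  { loc := s.loc, clock := fun i => s.clock i + 1, v := s.v }

/-- One step of the (original) semantics of a G-MAPT. -/
inductive Step (M : GMAPT n Val Loc) : MState n Val Loc → MState n Val Loc → Prop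
  | trans (i : Fin n) (t : ATrans Val Loc) (s : MState n Val Loc) :
      TransEnabled M i t s → Step M s (fireTrans i t s)
  | reset (i : Fin n) (s : MState n Val Loc) :
      ResetEnabled M i s → Step M s (fireReset M i s)
  | time (s : MState n Val Loc) : TimeEnabled M s → Step M s (tickState s)

/-- A state is reachable if some sequence of steps leads to it from the initial state. -/
def Reachable (M : GMAPT n Val Loc) (s : MState n Val Loc) : Prop :=
  Relation.ReflTransGen (Step M) M.initState s


/-- Constraint 1 (strong liveness). -/
def StrongLiveness (M : GMAPT n Val Loc) : Prop :=
  (∀ i, M.initState.loc i = M.finalLoc i → M.initState.clock i ≤ M.period i) ∧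
  (∀ i, M.initState.loc i ≠ M.finalLoc i →
    ∃ t ∈ M.trans i, t.src = M.initState.loc i ∧ M.initState.clock i ≤ t.hi) ∧
  (∀ i, ∀ tin ∈ M.trans i, tin.dst ≠ M.initLoc i → tin.dst ≠ M.finalLoc i →
    ∀ tout ∈ M.trans i, tout.src = tin.dst → tin.hi ≤ tout.hi) ∧
  (∀ i, ∀ tin ∈ M.trans i, tin.dst = M.finalLoc i → tin.hi ≤ M.period i)

/-- Structural conditions: each agent's transitions form a DAG between a unique initial
  locality (no incoming transition) and a unique final one (no outgoing transition),
  every non-final locality having an outgoing transition. -/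
def WellFormed (M : GMAPT n Val Loc) : Prop :=
  (∀ i, ∀ t ∈ M.trans i, t.src ≠ M.finalLoc i) ∧
  (∀ i, ∀ t ∈ M.trans i, t.dst ≠ M.initLoc i) ∧
  (∀ i, ∀ t ∈ M.trans i, t.dst ≠ M.finalLoc i → ∃ t' ∈ M.trans i, t'.src = t.dst) ∧
  (∀ i, M.initLoc i ≠ M.finalLoc i → ∃ t ∈ M.trans i, t.src = M.initLoc i)


/-- A path of transitions of agent `i` from a locality to another. -/
def AgentPath (M : GMAPT n Val Loc) (i : Fin n) :
    List (ATrans Val Loc) → Loc → Loc → Prop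
  | [], l, l' => l = l'
  | t :: p, l, l' => t ∈ M.trans i ∧ t.src = l ∧ AgentPath M i p t.dst l'

/-- The transition graph of every agent is acyclic. -/
def AgentsAcyclic (M : GMAPT n Val Loc) : Prop :=
  ∀ i l p, p ≠ [] → ¬ AgentPath M i p l l

/-- Constraint 2 (acyclicity): `Val = W × X`, some agent increases the `X`-component
  on every path from its initial to its final locality, and no function ever
  decreases the `X`-component. -/
def XGrowth {W X : Type} [LinearOrder X] (M : GMAPT n (W × X) Loc) : Prop :=
  (∃ i, ∀ p, AgentPath M i p (M.initLoc i) (M.finalLoc i) →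
    ∃ t ∈ p, ∀ v : W × X, v.2 < (t.f v).2) ∧
  (∀ i, ∀ t ∈ M.trans i, ∀ v : W × X, v.2 ≤ (t.f v).2)


/-- A MAPT is a G-MAPT satisfying the strong-liveness and acyclicity constraints. -/
def IsMAPT {W X : Type} [LinearOrder X] (M : GMAPT n (W × X) Loc) : Prop :=
  StrongLiveness M ∧ WellFormed M ∧ AgentsAcyclic M ∧ XGrowth M


/-- One labelled step of the original semantics. -/
def EStep (M : GMAPT n Val Loc) :
    Ev n Val Loc → MState n Val Loc → MState n Val Loc → Prop
  | .tr i t, s, s' => TransEnabled M i t s ∧ s' = fireTrans i t s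
  | .rst i, s, s' => ResetEnabled M i s ∧ s' = fireReset M i s
  | .tick, s, s' => TimeEnabled M s ∧ s' = tickState s

/-- An evolution: a labelled path of the original semantics. -/
def Evolution (M : GMAPT n Val Loc) :
    List (Ev n Val Loc) → MState n Val Loc → MState n Val Loc → Prop
  | [], s, s' => s = s'
  | e :: w, s, s' => ∃ s₁, EStep M e s s₁ ∧ Evolution M w s₁ s'

def isTick : Ev n Val Loc → Bool
  | .tick => true
  | _ => false

/-- Δ(ω): total elapsed time of an evolution. -/
def timeLen (w : List (Ev n Val Loc)) : ℕ := (w.filter isTick).length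

/-- word(ω): the untimed projection of an evolution onto transitions and resets. -/
def wordOf (w : List (Ev n Val Loc)) : List (Ev n Val Loc) :=
  w.filter (fun e => ! isTick e)

/-- The number of resets of agent `i` in an evolution. -/
def resetCount (i : Fin n) (w : List (Ev n Val Loc)) : ℕ :=
  (w.filter (fun e => match e with | .rst j => decide (j = i) | _ => false)).length


/-- There is an evolution of `M` from `a` to `s`. -/
def EvReach (M : GMAPT n Val Loc) (a s : MState n Val Loc) : Prop :=
  ∃ w, Evolution M w a s

/-- Strict order of the state DAG: a nonempty evolution from `s` to `s'`. -/
def StrictBelow (M : GMAPT n Val Loc) (s s' : MState n Val Loc) : Prop :=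
  ∃ w, w ≠ [] ∧ Evolution M w s s'

/-- A coherent cut of the sub-DAG of states reachable from `a`: a maximal antichain all
  of whose states share locality and clock vectors and lie at equal time distance
  from `a`. -/
def IsCoherentCutFrom (M : GMAPT n Val Loc) (a : MState n Val Loc)
    (C : Set (MState n Val Loc)) : Prop :=
  (∀ s ∈ C, EvReach M a s) ∧
  (∀ s ∈ C, ∀ s' ∈ C, ¬ StrictBelow M s s') ∧
  (∀ s, EvReach M a s → s ∉ C → ∃ s' ∈ C, StrictBelow M s s' ∨ StrictBelow M s' s) ∧
  (∀ s ∈ C, ∀ s' ∈ C, s.loc = s'.loc ∧ s.clock = s'.clock) ∧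
  (∀ s ∈ C, ∀ s' ∈ C, ∀ w w', Evolution M w a s → Evolution M w' a s' →
    timeLen w = timeLen w')

/-- A coherent cut of the state space of `M`. -/
def IsCoherentCut (M : GMAPT n Val Loc) (C : Set (MState n Val Loc)) : Prop :=
  IsCoherentCutFrom M M.initState C


lemma evolution_append {M : GMAPT n Val Loc} :
    ∀ (u v : List (Ev n Val Loc)) (a b c : MState n Val Loc),
      Evolution M u a b → Evolution M v b c → Evolution M (u ++ v) a c
  | [], v, a, b, c, hu, hv => by cases hu; exact hv
  | e :: u, v, a, b, c, hu, hv => by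
    obtain ⟨s₁, he, hu⟩ := hu
    exact ⟨s₁, he, evolution_append u v s₁ b c hu hv⟩

lemma timeLen_append (u v : List (Ev n Val Loc)) :
    timeLen (u ++ v) = timeLen u + timeLen v := by
  simp [timeLen, List.filter_append]

/-- the time distance between coherent cuts is constant. -/
theorem stmt8 {W X : Type} [LinearOrder X] (M : GMAPT n (W × X) Loc)
    (hM : IsMAPT M) (C1 C2 : Set (MState n (W × X) Loc))
    (h1 : IsCoherentCut M C1) (h2 : IsCoherentCut M C2)
    (s1 s1' s2 s2' : MState n (W × X) Loc)
    (hs1 : s1 ∈ C1) (hs1' : s1' ∈ C1) (hs2 : s2 ∈ C2) (hs2' : s2' ∈ C2)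
    (w w' : List (Ev n (W × X) Loc))
    (hw : Evolution M w s1 s2) (hw' : Evolution M w' s1' s2') :
    timeLen w = timeLen w' := by
  obtain ⟨u, hu⟩ := h1.1 s1 hs1
  obtain ⟨u', hu'⟩ := h1.1 s1' hs1'
  have h12 : Evolution M (u ++ w) M.initState s2 :=
    evolution_append u w _ _ _ hu hw
  have h12' : Evolution M (u' ++ w') M.initState s2' :=
    evolution_append u' w' _ _ _ hu' hw'
  have hC2 := h2.2.2.2.2 s2 hs2 s2' hs2' (u ++ w) (u' ++ w') h12 h12'
  have hC1 := h1.2.2.2.2 s1 hs1 s1' hs1' u u' hu hu'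
  rw [timeLen_append, timeLen_append, hC1] at hC2
  omega
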